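/- For a suitable pair (A,B), the second Sylvester sum satisfies S_2(A,B) = (S_0−1)·S_0·(2S_0−1)/6 + (S_0(A^2,B^2)/12)·(2S_0−1), where S_0 = S_0(A,B). Equivalently, S_2(A,B) = F·S_1(A,B) − 2·Σ_{n=0}^{S_0−1} n^2, where F is the Frobenius number of the semigroup generated by G(A,B). -/

import Mathlib

/-!
The Apéry set of `g₀ = a₁⋯a_k` in the semigroup `⟨g₀, …, g_k⟩` is the mixed-radix set
`{∑_{i ≥ 1} vᵢ gᵢ : 0 ≤ vᵢ < aᵢ}`: the coprimality conditions make its `g₀` elements pairwise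
incongruent mod `g₀`, and `n ≥ 0` is representable iff it is at least the Apéry element congruent
to it. This set is invariant under `w ↦ T - w` with `T = ∑ (aᵢ - 1) gᵢ`, so the semigroup is
symmetric with Frobenius number `F = T - g₀`: the gaps `n` and the representable `F - n` pair off,
which gives `2 S₀ = F + 1` and, by expanding `∑_{m ≤ F} m²`, `S₂ = F S₁ - 2 ∑_{n < S₀} n²`.
Selmer's formula `2 g₀ S₁ = ∑ w² - ∑_{r < g₀} r² - g₀ (∑ w - ∑_{r < g₀} r)` reduces `S₁` to the
first two moments of the Apéry set, which the mixed-radix form makes `g₀ T / 2` and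
`g₀ (3 T² + T(A², B²)) / 12`; as `T(A², B²) + 1 = 2 S₀(A², B²) + g₀²`, this yields
`S₁ = S₀ (S₀ - 1) / 2 + S₀(A², B²) / 12`, and with it the first formula.
-/

open Finset

/-- The compound sequence: `g k A B i = b₁⋯bᵢ · aᵢ₊₁⋯a_k` (0-indexed: `A j = a_{j+1}`,
`B j = b_{j+1}`). -/
def compoundSeq (k : ℕ) (A B : ℕ → ℕ) (i : ℕ) : ℕ :=
  (∏ j ∈ Finset.range i, B j) * (∏ j ∈ Finset.Ico i k, A j)

/-- `n : ℤ` is representable as a nonnegative integer combination of `g₀,…,g_k`. -/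
def RepZ (k : ℕ) (A B : ℕ → ℕ) (n : ℤ) : Prop :=
  ∃ c : Fin (k + 1) → ℕ, n = ∑ i : Fin (k + 1), (c i : ℤ) * (compoundSeq k A B (i : ℕ) : ℤ)

theorem sum_range_natCast_mul_two {R : Type*} [CommRing R] (n : ℕ) :
    2 * ∑ i ∈ range n, (i : R) = n * (n - 1) := by
  induction n with
  | zero => simp
  | succ n ih => rw [sum_range_succ, mul_add, ih]; push_cast; ring

theorem sum_range_natCast_sq_mul_six {R : Type*} [CommRing R] (n : ℕ) :
    6 * ∑ i ∈ range n, (i : R) ^ 2 = n * (n - 1) * (2 * n - 1) := by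
  induction n with
  | zero => simp
  | succ n ih => rw [sum_range_succ, mul_add, ih]; push_cast; ring

section Reflect

variable {s : Finset ℕ} {m : ℕ}

theorem sum_range_eq_sum_add_sum_reflect {M : Type*} [AddCommMonoid M]
    (hs : s ⊆ range m) (hsymm : ∀ n < m, n ∈ s ↔ m - 1 - n ∉ s) (f : ℕ → M) :
    ∑ n ∈ range m, f n = ∑ n ∈ s, f n + ∑ n ∈ s, f (m - 1 - n) := by
  have hcompl : ∑ n ∈ s, f (m - 1 - n) = ∑ n ∈ range m \ s, f n := by
    refine sum_nbij' (m - 1 - ·) (m - 1 - ·) (fun n hn => ?_) (fun n hn => ?_)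
      (fun n hn => ?_) (fun n hn => ?_) fun _ _ => rfl
    · have := mem_range.1 (hs hn)
      exact mem_sdiff.2 ⟨mem_range.2 (by omega), (hsymm n this).1 hn⟩
    · obtain ⟨hn, hns⟩ := mem_sdiff.1 hn
      exact not_not.1 ((hsymm n (mem_range.1 hn)).not.1 hns)
    · have := mem_range.1 (hs hn); omega
    · have := mem_range.1 (mem_sdiff.1 hn).1; omega
  rw [hcompl, add_comm, sum_sdiff hs]

theorem two_mul_card_of_reflect (hs : s ⊆ range m) (hsymm : ∀ n < m, n ∈ s ↔ m - 1 - n ∉ s) :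
    2 * s.card = m := by
  simpa [two_mul] using (sum_range_eq_sum_add_sum_reflect hs hsymm fun _ => (1 : ℕ)).symm

theorem sum_sq_of_reflect (hs : s ⊆ range m) (hsymm : ∀ n < m, n ∈ s ↔ m - 1 - n ∉ s) :
    ∑ n ∈ s, (n : ℚ) ^ 2 =
      (2 * s.card - 1) * ∑ n ∈ s, (n : ℚ) - 2 * ∑ n ∈ range s.card, (n : ℚ) ^ 2 := by
  have hm : (m : ℚ) = 2 * s.card := by exact_mod_cast (two_mul_card_of_reflect hs hsymm).symm
  have hsplit := sum_range_eq_sum_add_sum_reflect hs hsymm fun n => (n : ℚ) ^ 2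
  have hreflect : ∀ n ∈ s, ((m - 1 - n : ℕ) : ℚ) ^ 2 =
      (2 * s.card - 1) ^ 2 - 2 * (2 * s.card - 1) * n + (n : ℚ) ^ 2 := by
    intro n hn
    have := mem_range.1 (hs hn)
    rw [Nat.cast_sub (by omega), Nat.cast_sub (by omega), hm]; push_cast; ring
  rw [sum_congr rfl hreflect, sum_add_distrib, sum_sub_distrib, sum_const, ← mul_sum,
    nsmul_eq_mul] at hsplit
  have hm6 := sum_range_natCast_sq_mul_six (R := ℚ) m
  have hN6 := sum_range_natCast_sq_mul_six (R := ℚ) s.card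
  rw [hm] at hm6
  linear_combination (-1 / 2 : ℚ) * hsplit + (1 / 12 : ℚ) * hm6 + (1 / 3 : ℚ) * hN6

end Reflect

section Selmer

variable {P : ℕ} {W s : Finset ℕ} (hP : 0 < P) (hW : Set.InjOn (· % P) W)
  (hWP : W.image (· % P) = range P) (hs : ∀ w ∈ W, ∀ n, w ≡ n [MOD P] → (n ∈ s ↔ n < w))
include hP hW hWP hs

theorem sum_gaps_eq_sum_sum_range {M : Type*} [AddCommMonoid M] (f : ℕ → M) :
    ∑ n ∈ s, f n = ∑ w ∈ W, ∑ t ∈ range (w / P), f (w % P + P * t) := by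
  rw [sum_sigma']
  symm
  refine sum_bij (fun x _ => x.1 % P + P * x.2) (fun x hx => ?_)
    (fun x hx y hy heq => ?_) (fun n hn => ?_) fun _ _ => rfl
  · obtain ⟨w, t⟩ := x
    obtain ⟨hw, ht⟩ := mem_sigma.1 hx
    replace ht : t < w / P := mem_range.1 ht
    refine (hs w hw _ ?_).2 ?_
    · simp [Nat.ModEq, Nat.add_mul_mod_self_left]
    · show w % P + P * t < w
      have := Nat.mod_add_div w P
      have := Nat.mul_lt_mul_of_pos_left ht hP
      omega
  · obtain ⟨w, t⟩ := x
    obtain ⟨w', t'⟩ := y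
    obtain ⟨hw, -⟩ := mem_sigma.1 hx
    obtain ⟨hw', -⟩ := mem_sigma.1 hy
    have hmod : w % P = w' % P := by simpa [Nat.add_mul_mod_self_left] using congrArg (· % P) heq
    obtain rfl := hW hw hw' hmod
    simp_all [hP.ne']
  · obtain ⟨w, hw, hwn⟩ := mem_image.1 (hWP ▸ mem_range.2 (Nat.mod_lt n hP))
    have hnw := (hs w hw n hwn).1 hn
    change w % P = n % P at hwn
    refine ⟨⟨w, n / P⟩, mem_sigma.2 ⟨hw, mem_range.2 ?_⟩, by simp [hwn, Nat.mod_add_div]⟩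
    show n / P < w / P
    have := Nat.mod_add_div n P
    have := Nat.mod_add_div w P
    exact Nat.lt_of_mul_lt_mul_left (a := P) (by omega)

theorem selmer_sum_gaps :
    2 * P * ∑ n ∈ s, (n : ℚ) = ∑ w ∈ W, (w : ℚ) ^ 2 - ∑ r ∈ range P, (r : ℚ) ^ 2
      - P * (∑ w ∈ W, (w : ℚ) - ∑ r ∈ range P, (r : ℚ)) := by
  have hres (g : ℕ → ℚ) : ∑ w ∈ W, g (w % P) = ∑ r ∈ range P, g r := by
    rw [← hWP, sum_image hW]
  have hclass (w : ℕ) : 2 * P * ∑ t ∈ range (w / P), ((w % P + P * t : ℕ) : ℚ) =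
      (w : ℚ) ^ 2 - ((w % P : ℕ) : ℚ) ^ 2 - P * (w - (w % P : ℕ)) := by
    have hw : ((w % P : ℕ) : ℚ) + P * (w / P : ℕ) = w := by exact_mod_cast Nat.mod_add_div w P
    have hgauss := sum_range_natCast_mul_two (R := ℚ) (w / P)
    push_cast
    rw [sum_add_distrib, sum_const, card_range, nsmul_eq_mul, ← mul_sum, ← hw]
    linear_combination (P : ℚ) ^ 2 * hgauss
  rw [sum_gaps_eq_sum_sum_range hP hW hWP hs, mul_sum, sum_congr rfl fun w _ => hclass w,
    sum_sub_distrib, sum_sub_distrib, ← mul_sum, sum_sub_distrib, hres (· ^ 2),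
    hres fun r => (r : ℚ)]

end Selmer

theorem Nat.ModEq.eq_and_modEq_of_mul_add_mul {a b P w w' v v' : ℕ} (hab : a.Coprime b)
    (hv : v < a) (hv' : v' < a) (h : a * w + v * b ≡ a * w' + v' * b [MOD a * P]) :
    v = v' ∧ w ≡ w' [MOD P] := by
  have hvb : v * b ≡ v' * b [MOD a] := by
    simpa [Nat.ModEq, Nat.mul_add_mod] using h.of_mul_right P
  obtain rfl : v = v' := (Nat.ModEq.cancel_right_of_coprime hab hvb).eq_of_lt_of_lt hv hv'
  exact ⟨rfl, Nat.ModEq.mul_left_cancel' (by omega) (Nat.ModEq.add_right_cancel' _ h)⟩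

section CompoundSequence

variable {k : ℕ} {A B : ℕ → ℕ}

theorem compoundSeq_succ_of_le {i : ℕ} (h : i ≤ k) :
    compoundSeq (k + 1) A B i = A k * compoundSeq k A B i := by
  rw [compoundSeq, compoundSeq, prod_Ico_succ_top h]
  ring

theorem compoundSeq_self : compoundSeq k A B k = ∏ j ∈ range k, B j := by
  simp [compoundSeq]

theorem compoundSeq_zero_pos (hA : ∀ i < k, 0 < A i) : 0 < compoundSeq k A B 0 := by
  rw [compoundSeq, range_zero, prod_empty, one_mul]
  exact prod_pos fun j hj => hA j (mem_Ico.1 hj).2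

theorem compoundSeq_sq (i : ℕ) :
    compoundSeq k (fun t => A t ^ 2) (fun t => B t ^ 2) i = compoundSeq k A B i ^ 2 := by
  rw [compoundSeq, compoundSeq, prod_pow, prod_pow, mul_pow]

def Representable (k : ℕ) (A B : ℕ → ℕ) (n : ℕ) : Prop :=
  ∃ c : Fin (k + 1) → ℕ, n = ∑ i : Fin (k + 1), c i * compoundSeq k A B i

theorem repZ_iff_representable_toNat {m : ℤ} :
    RepZ k A B m ↔ 0 ≤ m ∧ Representable k A B m.toNat := by
  constructor
  · rintro ⟨c, rfl⟩
    refine ⟨by positivity, c, ?_⟩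
    exact_mod_cast Int.toNat_natCast _
  · rintro ⟨hm, c, hc⟩
    exact ⟨c, by rw [← Int.toNat_of_nonneg hm, hc]; push_cast; rfl⟩

theorem Representable.add_mul_compoundSeq {m : ℕ} (h : Representable k A B m) (q : ℕ)
    (i : Fin (k + 1)) :
    Representable k A B (m + q * compoundSeq k A B i) := by
  obtain ⟨c, rfl⟩ := h
  refine ⟨c + Pi.single i q, ?_⟩
  simp [add_mul, sum_add_distrib, Pi.single_apply]

theorem representable_zero (A B : ℕ → ℕ) (n : ℕ) : Representable 0 A B n :=
  ⟨fun _ => n, by simp [compoundSeq]⟩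

theorem representable_succ_iff (ha : 0 < A k) {n : ℕ} :
    Representable (k + 1) A B n ↔
      ∃ m, Representable k A B m ∧ ∃ v < A k, n = A k * m + v * ∏ j ∈ range (k + 1), B j := by
  have hlift (c : Fin (k + 1) → ℕ) : ∑ i : Fin (k + 1), c i * compoundSeq (k + 1) A B i =
      A k * ∑ i : Fin (k + 1), c i * compoundSeq k A B i := by
    rw [mul_sum]
    refine sum_congr rfl fun i _ => ?_
    rw [compoundSeq_succ_of_le (Nat.lt_succ_iff.1 i.isLt)]
    ring
  constructor
  · rintro ⟨c, rfl⟩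
    -- With `c_{k+1} = A k * q + r`, the part `A k * q * ∏_{j ≤ k} B j = A k * (q * B k) * g_k`
    -- is absorbed into `m`.
    refine ⟨_, Representable.add_mul_compoundSeq ⟨fun i => c i.castSucc, rfl⟩
      (c (Fin.last _) / A k * B k) (Fin.last k), c (Fin.last _) % A k, Nat.mod_lt _ ha, ?_⟩
    rw [Fin.sum_univ_castSucc]
    simp only [Fin.val_castSucc, Fin.val_last]
    rw [hlift fun i => c i.castSucc, compoundSeq_self, compoundSeq_self, prod_range_succ]
    conv_lhs => rw [← Nat.mod_add_div (c (Fin.last (k + 1))) (A k)]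
    ring
  · rintro ⟨m, ⟨c, rfl⟩, v, -, rfl⟩
    refine ⟨Fin.snoc c v, ?_⟩
    rw [Fin.sum_univ_castSucc (n := k + 1)]
    simp only [Fin.snoc_castSucc, Fin.snoc_last, Fin.val_castSucc, Fin.val_last, hlift,
      compoundSeq_self]

-- `{∑_{i=1}^k vᵢ gᵢ : 0 ≤ vᵢ < aᵢ}`, built from level `k` via `gᵢ⁽ᵏ⁺¹⁾ = a_{k+1} gᵢ⁽ᵏ⁾` for `i ≤ k`
-- and `g_{k+1}⁽ᵏ⁺¹⁾ = b₁⋯b_{k+1}`.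
def aperySet (A B : ℕ → ℕ) : ℕ → Finset ℕ
  | 0 => {0}
  | k + 1 => (aperySet A B k ×ˢ range (A k)).image
      fun p => A k * p.1 + p.2 * ∏ j ∈ range (k + 1), B j

def aperyMax (k : ℕ) (A B : ℕ → ℕ) : ℕ :=
  ∑ i ∈ range k, (A i - 1) * compoundSeq k A B (i + 1)

theorem aperyMax_succ :
    aperyMax (k + 1) A B = A k * aperyMax k A B + (A k - 1) * ∏ j ∈ range (k + 1), B j := by
  rw [aperyMax, aperyMax, sum_range_succ, mul_sum, compoundSeq_self]
  congr 1
  refine sum_congr rfl fun i hi => ?_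
  rw [compoundSeq_succ_of_le (mem_range.1 hi)]
  ring

theorem coprime_prod_of_suitable (hsuit : ∀ i j, j ≤ i → i < k + 1 → Nat.Coprime (A i) (B j)) :
    (A k).Coprime (∏ j ∈ range (k + 1), B j) :=
  Nat.Coprime.prod_right fun j hj => hsuit k j (Nat.lt_succ_iff.1 (mem_range.1 hj)) k.lt_succ_self

theorem eq_of_modEq_of_mem_aperySet_succ
    (hinj : Set.InjOn (· % compoundSeq k A B 0) (aperySet A B k))
    (hcop : (A k).Coprime (∏ j ∈ range (k + 1), B j)) {p q : ℕ × ℕ}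
    (hp : p ∈ aperySet A B k ×ˢ range (A k)) (hq : q ∈ aperySet A B k ×ˢ range (A k))
    (h : A k * p.1 + p.2 * ∏ j ∈ range (k + 1), B j ≡
      A k * q.1 + q.2 * ∏ j ∈ range (k + 1), B j [MOD compoundSeq (k + 1) A B 0]) : p = q := by
  rw [mem_product, mem_range] at hp hq
  rw [compoundSeq_succ_of_le k.zero_le] at h
  obtain ⟨hv, hw⟩ := h.eq_and_modEq_of_mul_add_mul hcop hp.2 hq.2
  exact Prod.ext (hinj hp.1 hq.1 hw) hv

theorem le_aperyMax_of_mem_aperySet {w : ℕ} (hw : w ∈ aperySet A B k) : w ≤ aperyMax k A B := by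
  induction k generalizing w with
  | zero => simp_all [aperySet, aperyMax]
  | succ k ih =>
    obtain ⟨⟨w₁, v⟩, hp, rfl⟩ := mem_image.1 hw
    obtain ⟨hw₁, hv⟩ := mem_product.1 hp
    rw [aperyMax_succ]
    gcongr
    · exact ih hw₁
    · exact Nat.le_sub_one_of_lt (mem_range.1 hv)

theorem aperyMax_sub_mem_aperySet {w : ℕ} (hw : w ∈ aperySet A B k) :
    aperyMax k A B - w ∈ aperySet A B k := by
  induction k generalizing w with
  | zero => simp_all [aperySet, aperyMax]
  | succ k ih =>
    obtain ⟨⟨w₁, v⟩, hp, rfl⟩ := mem_image.1 hw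
    obtain ⟨hw₁, hv⟩ := mem_product.1 hp
    rw [mem_range] at hv
    refine mem_image.2 ⟨⟨aperyMax k A B - w₁, A k - 1 - v⟩,
      mem_product.2 ⟨ih hw₁, mem_range.2 (by omega)⟩, ?_⟩
    obtain ⟨u, hu⟩ := Nat.exists_eq_add_of_le (le_aperyMax_of_mem_aperySet hw₁)
    obtain ⟨x, hx⟩ := Nat.exists_eq_add_of_le (Nat.le_sub_one_of_lt hv)
    rw [aperyMax_succ, hu, hx, Nat.add_sub_cancel_left, Nat.add_sub_cancel_left]
    exact Nat.eq_sub_of_add_eq (by ring)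

theorem aperyMax_mem_aperySet (hA : ∀ i < k, 0 < A i) : aperyMax k A B ∈ aperySet A B k := by
  induction k with
  | zero => simp [aperySet, aperyMax]
  | succ k ih =>
    refine mem_image.2 ⟨⟨aperyMax k A B, A k - 1⟩, mem_product.2 ⟨ih fun i hi => hA i (by omega),
      mem_range.2 (Nat.sub_lt (hA k k.lt_succ_self) one_pos)⟩, aperyMax_succ.symm⟩

theorem representable_iff_exists_aperySet (hA : ∀ i < k, 0 < A i) {n : ℕ} :
    Representable k A B n ↔ ∃ w ∈ aperySet A B k, ∃ d, n = d * compoundSeq k A B 0 + w := by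
  induction k generalizing n with
  | zero => simp [aperySet, compoundSeq, representable_zero]
  | succ k ih =>
    replace ih := @ih fun i hi => hA i (by omega)
    rw [representable_succ_iff (hA k k.lt_succ_self), compoundSeq_succ_of_le k.zero_le]
    constructor
    · rintro ⟨m, hm, v, hv, rfl⟩
      obtain ⟨w₁, hw₁, d, rfl⟩ := ih.1 hm
      exact ⟨A k * w₁ + v * ∏ j ∈ range (k + 1), B j,
        mem_image.2 ⟨(w₁, v), mem_product.2 ⟨hw₁, mem_range.2 hv⟩, rfl⟩, d, by ring⟩
    · rintro ⟨_, hw, d, rfl⟩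
      obtain ⟨⟨w₁, v⟩, hp, rfl⟩ := mem_image.1 hw
      obtain ⟨hw₁, hv⟩ := mem_product.1 hp
      exact ⟨_, ih.2 ⟨w₁, hw₁, d, rfl⟩, v, mem_range.1 hv, by ring⟩

section Suitable

variable (hA : ∀ i < k, 0 < A i)
  (hsuit : ∀ i j, j ≤ i → i < k → Nat.Coprime (A i) (B j))
include hA hsuit

theorem aperySet_injOn_mod :
    Set.InjOn (· % compoundSeq k A B 0) (aperySet A B k) := by
  induction k with
  | zero => simp [aperySet]
  | succ k ih =>
    have hinj := ih (fun i hi => hA i (by omega)) fun i j hji hi => hsuit i j hji (by omega)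
    rintro _ hw _ hw' h
    obtain ⟨p, hp, rfl⟩ := mem_image.1 hw
    obtain ⟨q, hq, rfl⟩ := mem_image.1 hw'
    rw [eq_of_modEq_of_mem_aperySet_succ hinj (coprime_prod_of_suitable hsuit) hp hq h]

theorem sum_aperySet_succ (hcop : (A k).Coprime (∏ j ∈ range (k + 1), B j))
    {M : Type*} [AddCommMonoid M] (f : ℕ → M) :
    ∑ w ∈ aperySet A B (k + 1), f w = ∑ w ∈ aperySet A B k,
      ∑ v ∈ range (A k), f (A k * w + v * ∏ j ∈ range (k + 1), B j) := by
  rw [aperySet, sum_image fun p hp q hq h => eq_of_modEq_of_mem_aperySet_succ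
    (aperySet_injOn_mod hA hsuit) hcop hp hq (congrArg (· % compoundSeq (k + 1) A B 0) h),
    sum_product]

theorem card_aperySet :
    #(aperySet A B k) = compoundSeq k A B 0 := by
  induction k with
  | zero => simp [aperySet, compoundSeq]
  | succ k ih =>
    have hA' : ∀ i < k, 0 < A i := fun i hi => hA i (by omega)
    have hsuit' : ∀ i j, j ≤ i → i < k → Nat.Coprime (A i) (B j) :=
      fun i j hji hi => hsuit i j hji (by omega)
    rw [card_eq_sum_ones, sum_aperySet_succ hA' hsuit' (coprime_prod_of_suitable hsuit),
      compoundSeq_succ_of_le k.zero_le, ← ih hA' hsuit']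
    simp [mul_comm]

theorem image_mod_aperySet :
    (aperySet A B k).image (· % compoundSeq k A B 0) = range (compoundSeq k A B 0) := by
  refine eq_of_subset_of_card_le (fun r hr => ?_) ?_
  · obtain ⟨w, -, rfl⟩ := mem_image.1 hr
    exact mem_range.2 (Nat.mod_lt _ (compoundSeq_zero_pos hA))
  · rw [card_range, card_image_of_injOn (aperySet_injOn_mod hA hsuit), card_aperySet hA hsuit]

theorem exists_mem_aperySet_modEq (n : ℕ) :
    ∃ w ∈ aperySet A B k, w ≡ n [MOD compoundSeq k A B 0] := by
  have hn : n % compoundSeq k A B 0 ∈ range (compoundSeq k A B 0) :=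
    mem_range.2 (Nat.mod_lt _ (compoundSeq_zero_pos hA))
  rw [← image_mod_aperySet hA hsuit] at hn
  exact mem_image.1 hn

theorem compoundSeq_zero_le_aperyMax_add_one :
    compoundSeq k A B 0 ≤ aperyMax k A B + 1 := by
  rw [← card_aperySet hA hsuit, ← card_range (aperyMax k A B + 1)]
  exact card_le_card fun w hw => mem_range.2 (Nat.lt_succ_of_le (le_aperyMax_of_mem_aperySet hw))

theorem representable_iff_le {w n : ℕ} (hw : w ∈ aperySet A B k)
    (hwn : w ≡ n [MOD compoundSeq k A B 0]) : Representable k A B n ↔ w ≤ n := by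
  rw [representable_iff_exists_aperySet hA]
  constructor
  · rintro ⟨w', hw', d, rfl⟩
    obtain rfl := aperySet_injOn_mod hA hsuit hw hw' (Nat.modEq_mul_modulus_add_iff.1 hwn)
    exact Nat.le_add_left _ _
  · intro hle
    obtain ⟨d, rfl⟩ := (Nat.modEq_iff_exists_eq_add hle).1 hwn
    exact ⟨w, hw, d, by ring⟩

theorem add_le_aperyMax_of_not_representable {n : ℕ} (h : ¬ Representable k A B n) :
    n + compoundSeq k A B 0 ≤ aperyMax k A B := by
  obtain ⟨w, hw, hwn⟩ := exists_mem_aperySet_modEq hA hsuit n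
  have hnw : n < w := not_le.1 (mt (representable_iff_le hA hsuit hw hwn).2 h)
  exact (hwn.symm.add_le_of_lt hnw).trans (le_aperyMax_of_mem_aperySet hw)

theorem representable_iff_not_representable_sub {n : ℕ}
    (hn : n + compoundSeq k A B 0 ≤ aperyMax k A B) :
    Representable k A B n ↔ ¬ Representable k A B (aperyMax k A B - compoundSeq k A B 0 - n) := by
  obtain ⟨w, hw, hwn⟩ := exists_mem_aperySet_modEq hA hsuit n
  have hwT := le_aperyMax_of_mem_aperySet hw
  have hsymm : aperyMax k A B - w ≡ aperyMax k A B - compoundSeq k A B 0 - n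
      [MOD compoundSeq k A B 0] := by
    obtain ⟨c, hc⟩ := Nat.modEq_iff_dvd.1 hwn
    refine Nat.modEq_iff_dvd.2 ⟨-c - 1, ?_⟩
    push_cast [Nat.cast_sub hwT, Nat.cast_sub (Nat.le_sub_of_add_le hn),
      Nat.cast_sub (le_of_add_le_right hn)]
    linear_combination -hc
  rw [representable_iff_le hA hsuit hw hwn,
    representable_iff_le hA hsuit (aperyMax_sub_mem_aperySet hw) hsymm]
  have hg := compoundSeq_zero_pos (B := B) hA
  constructor
  · omega
  · exact fun h => hwn.le_of_lt_add (by omega)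

theorem not_repZ_aperyMax_sub :
    ¬ RepZ k A B ((aperyMax k A B : ℤ) - compoundSeq k A B 0) := by
  rw [repZ_iff_representable_toNat]
  rintro ⟨hnonneg, hrep⟩
  have hg := compoundSeq_zero_pos (B := B) hA
  have hle : compoundSeq k A B 0 ≤ aperyMax k A B := by omega
  rw [show ((aperyMax k A B : ℤ) - compoundSeq k A B 0).toNat =
    aperyMax k A B - compoundSeq k A B 0 by omega] at hrep
  have := (representable_iff_le hA hsuit (aperyMax_mem_aperySet hA)
    ((Nat.modEq_sub_modulus_iff hle).2 rfl)).1 hrep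
  omega

theorem repZ_of_aperyMax_sub_lt {m : ℤ} (hm : (aperyMax k A B : ℤ) - compoundSeq k A B 0 < m) :
    RepZ k A B m := by
  have := compoundSeq_zero_le_aperyMax_add_one hA hsuit
  refine repZ_iff_representable_toNat.2 ⟨by omega, by_contra fun h => ?_⟩
  have := add_le_aperyMax_of_not_representable hA hsuit h
  omega

theorem eq_aperyMax_sub_of_frobenius {F : ℤ} (hF1 : ¬ RepZ k A B F)
    (hF2 : ∀ m, F < m → RepZ k A B m) : F = (aperyMax k A B : ℤ) - compoundSeq k A B 0 :=
  le_antisymm (not_lt.1 fun h => hF1 (repZ_of_aperyMax_sub_lt hA hsuit h))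
    (not_lt.1 fun h => not_repZ_aperyMax_sub hA hsuit (hF2 _ h))

theorem two_mul_sum_aperySet :
    2 * ∑ w ∈ aperySet A B k, (w : ℚ) = compoundSeq k A B 0 * aperyMax k A B := by
  induction k with
  | zero => simp [aperySet, aperyMax]
  | succ k ih =>
    have hA' : ∀ i < k, 0 < A i := fun i hi => hA i (by omega)
    have hsuit' : ∀ i j, j ≤ i → i < k → Nat.Coprime (A i) (B j) :=
      fun i j hji hi => hsuit i j hji (by omega)
    have hinner (a G w : ℕ) : 2 * ∑ v ∈ range a, ((a * w + v * G : ℕ) : ℚ) =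
        2 * a ^ 2 * w + G * (a * (a - 1)) := by
      push_cast
      rw [sum_add_distrib, sum_const, card_range, nsmul_eq_mul, ← sum_mul]
      linear_combination (G : ℚ) * sum_range_natCast_mul_two (R := ℚ) a
    rw [sum_aperySet_succ hA' hsuit' (coprime_prod_of_suitable hsuit), mul_sum,
      sum_congr rfl fun w _ => hinner _ _ w, sum_add_distrib, ← mul_sum, sum_const,
      card_aperySet hA' hsuit', nsmul_eq_mul, aperyMax_succ, compoundSeq_succ_of_le k.zero_le]
    push_cast [Nat.cast_sub (hA k k.lt_succ_self)]
    linear_combination (A k : ℚ) ^ 2 * ih hA' hsuit'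

theorem twelve_mul_sum_sq_aperySet :
    12 * ∑ w ∈ aperySet A B k, (w : ℚ) ^ 2 = compoundSeq k A B 0 *
      (3 * aperyMax k A B ^ 2 + aperyMax k (fun t => A t ^ 2) (fun t => B t ^ 2)) := by
  induction k with
  | zero => simp [aperySet, aperyMax]
  | succ k ih =>
    have hA' : ∀ i < k, 0 < A i := fun i hi => hA i (by omega)
    have hsuit' : ∀ i j, j ≤ i → i < k → Nat.Coprime (A i) (B j) :=
      fun i j hji hi => hsuit i j hji (by omega)
    have hinner (a G w : ℕ) : 12 * ∑ v ∈ range a, ((a * w + v * G : ℕ) : ℚ) ^ 2 =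
        12 * a ^ 3 * w ^ 2 + 12 * a ^ 2 * (a - 1) * G * w +
          2 * G ^ 2 * (a * (a - 1) * (2 * a - 1)) := by
      have hexp : ∀ v ∈ range a, ((a * w + v * G : ℕ) : ℚ) ^ 2 =
          (a : ℚ) ^ 2 * w ^ 2 + 2 * a * w * G * v + G ^ 2 * v ^ 2 := fun v _ => by push_cast; ring
      rw [sum_congr rfl hexp, sum_add_distrib, sum_add_distrib, sum_const, card_range,
        nsmul_eq_mul, ← mul_sum, ← mul_sum]
      linear_combination (12 * a * w * G : ℚ) * sum_range_natCast_mul_two (R := ℚ) a +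
        (2 * G ^ 2 : ℚ) * sum_range_natCast_sq_mul_six (R := ℚ) a
    rw [sum_aperySet_succ hA' hsuit' (coprime_prod_of_suitable hsuit), mul_sum,
      sum_congr rfl fun w _ => hinner _ _ w, sum_add_distrib, sum_add_distrib, ← mul_sum,
      ← mul_sum, sum_const, card_aperySet hA' hsuit', nsmul_eq_mul, aperyMax_succ, aperyMax_succ,
      compoundSeq_succ_of_le k.zero_le, prod_pow]
    generalize ∏ j ∈ range (k + 1), B j = G
    push_cast [Nat.cast_sub (hA k k.lt_succ_self),
      Nat.cast_sub (Nat.one_le_pow 2 _ (hA k k.lt_succ_self))]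
    linear_combination (A k : ℚ) ^ 3 * ih hA' hsuit' +
      (6 * A k ^ 2 * (A k - 1) * G : ℚ) * two_mul_sum_aperySet hA' hsuit'

section Gaps

variable {NR : Finset ℕ} (hNR : ∀ n, n ∈ NR ↔ ¬ Representable k A B n)
include hNR

theorem gaps_subset_range :
    NR ⊆ range (aperyMax k A B + 1 - compoundSeq k A B 0) := fun n hn => by
  have := add_le_aperyMax_of_not_representable hA hsuit ((hNR n).1 hn)
  exact mem_range.2 (by omega)

theorem mem_gaps_iff_not_mem_reflect :
    ∀ n < aperyMax k A B + 1 - compoundSeq k A B 0,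
      n ∈ NR ↔ aperyMax k A B + 1 - compoundSeq k A B 0 - 1 - n ∉ NR := fun n hn => by
  rw [hNR, hNR, not_not, show aperyMax k A B + 1 - compoundSeq k A B 0 - 1 - n =
    aperyMax k A B - compoundSeq k A B 0 - n by omega,
    representable_iff_not_representable_sub hA hsuit (by omega), not_not]

theorem two_mul_card_gaps_add :
    2 * #NR + compoundSeq k A B 0 = aperyMax k A B + 1 := by
  have := two_mul_card_of_reflect (gaps_subset_range hA hsuit hNR)
    (mem_gaps_iff_not_mem_reflect hA hsuit hNR)
  have := compoundSeq_zero_le_aperyMax_add_one hA hsuit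
  omega

theorem selmer_sum_gaps_aperySet :
    2 * compoundSeq k A B 0 * ∑ n ∈ NR, (n : ℚ) =
      ∑ w ∈ aperySet A B k, (w : ℚ) ^ 2 - ∑ r ∈ range (compoundSeq k A B 0), (r : ℚ) ^ 2
        - compoundSeq k A B 0 * (∑ w ∈ aperySet A B k, (w : ℚ)
          - ∑ r ∈ range (compoundSeq k A B 0), (r : ℚ)) :=
  selmer_sum_gaps (compoundSeq_zero_pos hA) (aperySet_injOn_mod hA hsuit)
    (image_mod_aperySet hA hsuit) fun w hw n hwn => by
      rw [hNR, representable_iff_le hA hsuit hw hwn, not_le]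

theorem sylvester_sum_one {NR2 : Finset ℕ}
    (hNR2 : ∀ n, n ∈ NR2 ↔ ¬ Representable k (fun t => A t ^ 2) (fun t => B t ^ 2) n) :
    12 * ∑ n ∈ NR, (n : ℚ) = 6 * #NR * (#NR - 1) + #NR2 := by
  have hA2 : ∀ i < k, 0 < A i ^ 2 := fun i hi => pow_pos (hA i hi) 2
  have hsuit2 : ∀ i j, j ≤ i → i < k → Nat.Coprime (A i ^ 2) (B j ^ 2) :=
    fun i j hji hi => (hsuit i j hji hi).pow 2 2
  have hT : (aperyMax k A B : ℚ) = 2 * #NR + compoundSeq k A B 0 - 1 := by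
    rw [eq_sub_iff_add_eq]
    exact_mod_cast (two_mul_card_gaps_add hA hsuit hNR).symm
  have hT2 : (aperyMax k (fun t => A t ^ 2) (fun t => B t ^ 2) : ℚ) =
      2 * #NR2 + compoundSeq k A B 0 ^ 2 - 1 := by
    have := two_mul_card_gaps_add hA2 hsuit2 hNR2
    rw [compoundSeq_sq] at this
    rw [eq_sub_iff_add_eq]
    exact_mod_cast this.symm
  have hmean := two_mul_sum_aperySet hA hsuit
  have hsq := twelve_mul_sum_sq_aperySet hA hsuit
  rw [hT] at hmean hsq
  rw [hT2] at hsq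
  have hP : (compoundSeq k A B 0 : ℚ) ≠ 0 := by exact_mod_cast (compoundSeq_zero_pos hA).ne'
  refine mul_left_cancel₀ hP ?_
  linear_combination 6 * selmer_sum_gaps_aperySet hA hsuit hNR + (1 / 2 : ℚ) * hsq
    - 3 * (compoundSeq k A B 0 : ℚ) * hmean
    - sum_range_natCast_sq_mul_six (R := ℚ) (compoundSeq k A B 0)
    + 3 * (compoundSeq k A B 0 : ℚ) * sum_range_natCast_mul_two (R := ℚ) (compoundSeq k A B 0)

end Gaps

end Suitable

end CompoundSequence

theorem sylvester_sum_two_general (k : ℕ) (A B : ℕ → ℕ)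
    (hA : ∀ i, i < k → 0 < A i)
    (hsuit : ∀ i j, j ≤ i → i < k → Nat.Coprime (A i) (B j))
    (NR NR2 : Finset ℕ)
    (hNR : ∀ n : ℕ, n ∈ NR ↔
      ¬ ∃ c : Fin (k + 1) → ℕ, n = ∑ i : Fin (k + 1), c i * compoundSeq k A B (i : ℕ))
    (hNR2 : ∀ n : ℕ, n ∈ NR2 ↔
      ¬ ∃ c : Fin (k + 1) → ℕ,
        n = ∑ i : Fin (k + 1), c i * compoundSeq k (fun t => (A t) ^ 2) (fun t => (B t) ^ 2) (i : ℕ))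
    (F : ℤ) (hF1 : ¬ RepZ k A B F) (hF2 : ∀ m : ℤ, F < m → RepZ k A B m) :
    (∑ n ∈ NR, (n : ℚ) ^ 2) =
        ((NR.card : ℚ) - 1) * (NR.card : ℚ) * (2 * (NR.card : ℚ) - 1) / 6 +
          (NR2.card : ℚ) / 12 * (2 * (NR.card : ℚ) - 1) ∧
      (∑ n ∈ NR, (n : ℚ) ^ 2) =
        (F : ℚ) * (∑ n ∈ NR, (n : ℚ)) - 2 * ∑ n ∈ Finset.range NR.card, (n : ℚ) ^ 2 := by
  have hF : (F : ℚ) = 2 * #NR - 1 := by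
    have hcard : (2 * #NR : ℚ) + compoundSeq k A B 0 = aperyMax k A B + 1 := by
      exact_mod_cast two_mul_card_gaps_add hA hsuit hNR
    rw [eq_aperyMax_sub_of_frobenius hA hsuit hF1 hF2]
    push_cast
    linarith
  have hS2 : ∑ n ∈ NR, (n : ℚ) ^ 2 = F * ∑ n ∈ NR, (n : ℚ) - 2 * ∑ n ∈ range #NR, (n : ℚ) ^ 2 := by
    rw [hF]
    exact sum_sq_of_reflect (gaps_subset_range hA hsuit hNR)
      (mem_gaps_iff_not_mem_reflect hA hsuit hNR)
  refine ⟨?_, hS2⟩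
  rw [hS2, hF]
  linear_combination (2 * #NR - 1 : ℚ) / 12 * sylvester_sum_one hA hsuit hNR hNR2
    - (1 / 3 : ℚ) * sum_range_natCast_sq_mul_six (R := ℚ) NR.card

/-- `S₂(A,B) = (S₀−1)S₀(2S₀−1)/6 + (S₀(A²,B²)/12)(2S₀−1)`, and equivalently
`S₂(A,B) = F·S₁(A,B) − 2·Σ_{n=0}^{S₀−1} n²` where `F` is the Frobenius number. -/
theorem sylvester_sum_two (k : ℕ) (A B : ℕ → ℕ)
    (hA : ∀ i, i < k → 0 < A i) (hB : ∀ i, i < k → 0 < B i)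
    (hsuit : ∀ i j, j ≤ i → i < k → Nat.Coprime (A i) (B j))
    (NR NR2 : Finset ℕ)
    (hNR : ∀ n : ℕ, n ∈ NR ↔
      ¬ ∃ c : Fin (k + 1) → ℕ, n = ∑ i : Fin (k + 1), c i * compoundSeq k A B (i : ℕ))
    (hNR2 : ∀ n : ℕ, n ∈ NR2 ↔
      ¬ ∃ c : Fin (k + 1) → ℕ,
        n = ∑ i : Fin (k + 1), c i * compoundSeq k (fun t => (A t) ^ 2) (fun t => (B t) ^ 2) (i : ℕ))
    (F : ℤ) (hF1 : ¬ RepZ k A B F) (hF2 : ∀ m : ℤ, F < m → RepZ k A B m) :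
    (∑ n ∈ NR, (n : ℚ) ^ 2) =
        ((NR.card : ℚ) - 1) * (NR.card : ℚ) * (2 * (NR.card : ℚ) - 1) / 6 +
          (NR2.card : ℚ) / 12 * (2 * (NR.card : ℚ) - 1) ∧
      (∑ n ∈ NR, (n : ℚ) ^ 2) =
        (F : ℚ) * (∑ n ∈ NR, (n : ℚ)) - 2 * ∑ n ∈ Finset.range NR.card, (n : ℚ) ^ 2 :=
  sylvester_sum_two_general k A B hA hsuit NR NR2 hNR hNR2 F hF1 hF2
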